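/- For Hermitian positive definite matrices A and B, the geometric mean is symmetric: A^{1/2}(A^{-1/2} B A^{-1/2})^{1/2} A^{1/2} = B^{1/2}(B^{-1/2} A B^{-1/2})^{1/2} B^{1/2}. -/

import Mathlib

open Matrix
open scoped ComplexOrder Classical

/-- Square root of a matrix: the unique PSD square root when `M` is positive
semidefinite, junk value `0` otherwise. -/
noncomputable def msqrt {m : Type*} [Fintype m] [DecidableEq m] (M : Matrix m m ℂ) :
    Matrix m m ℂ :=
  if h : M.PosSemidef then
    h.1.eigenvectorUnitary.1 * diagonal ((↑) ∘ (√·) ∘ h.1.eigenvalues) *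
      (star h.1.eigenvectorUnitary : Matrix m m ℂ)
  else 0

/-- The matrix geometric mean `G(A,B) = A^{1/2} (A^{-1/2} B A^{-1/2})^{1/2} A^{1/2}`. -/
noncomputable def matGM {m : Type*} [Fintype m] [DecidableEq m] (A B : Matrix m m ℂ) :
    Matrix m m ℂ :=
  msqrt A * msqrt ((msqrt A)⁻¹ * B * (msqrt A)⁻¹) * msqrt A

/-!
`G(A, B)` is the unique positive semidefinite solution `X` of the Riccati equation
`X A⁻¹ X = B`: conjugating by `A^{-1/2}` turns it into `Y² = A^{-1/2} B A^{-1/2}` for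
`Y = A^{-1/2} X A^{-1/2}`, whose only PSD solution is the square root. Since `X` is invertible,
`X A⁻¹ X = B` is equivalent to `X B⁻¹ X = A`, so `G(A, B)` also solves the equation
characterising `G(B, A)`.
-/

namespace Matrix

lemma PosSemidef.mul_mul_same_of_isHermitian {m R : Type*} [Fintype m] [Ring R]
    [PartialOrder R] [StarRing R] {X S : Matrix m m R} (hX : X.PosSemidef)
    (hS : S.IsHermitian) : (S * X * S).PosSemidef := by
  simpa only [hS.eq] using hX.mul_mul_conjTranspose_same S

variable {m α : Type*} [Fintype m] [DecidableEq m] [CommRing α]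

lemma mul_inv_mul_eq_swap {X A B : Matrix m m α} (hX : IsUnit X.det) (hA : IsUnit A.det)
    (h : X * A⁻¹ * X = B) : X * B⁻¹ * X = A := by
  subst h
  rw [mul_inv_rev, mul_inv_rev, nonsing_inv_nonsing_inv _ hA]
  simp only [Matrix.mul_assoc, mul_nonsing_inv_cancel_left _ _ hX, nonsing_inv_mul _ hX,
    Matrix.mul_one]

lemma mul_nonsing_inv_mul_nonsing_inv_mul_cancel {S : Matrix m m α} (hS : IsUnit S.det)
    (Z : Matrix m m α) : S * (S⁻¹ * Z * S⁻¹) * S = Z := by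
  simp only [Matrix.mul_assoc, mul_nonsing_inv_cancel_left _ _ hS, nonsing_inv_mul _ hS,
    Matrix.mul_one]

lemma isUnit_det_of_mul_inv_mul_eq {X A B : Matrix m m α} (hB : IsUnit B.det)
    (h : X * A⁻¹ * X = B) : IsUnit X.det := by
  rw [← h, det_mul, det_mul, IsUnit.mul_iff, IsUnit.mul_iff] at hB
  exact hB.2

end Matrix

section msqrt

open scoped MatrixOrder

variable {m : Type*} [Fintype m] [DecidableEq m] {M : Matrix m m ℂ}

lemma msqrt_eq_cfcSqrt (hM : M.PosSemidef) : msqrt M = CFC.sqrt M := by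
  rw [msqrt, dif_pos hM, CFC.sqrt_eq_cfc, cfc_nnreal_eq_real _ M, hM.1.cfc_eq, IsHermitian.cfc]
  congr 3
  funext i
  simp [max_eq_left (hM.eigenvalues_nonneg i)]

lemma posSemidef_msqrt (M : Matrix m m ℂ) : (msqrt M).PosSemidef := by
  by_cases hM : M.PosSemidef
  · rw [msqrt_eq_cfcSqrt hM]
    exact (CFC.sqrt_nonneg M).posSemidef
  · rw [msqrt, dif_neg hM]
    exact .zero

lemma msqrt_mul_msqrt (hM : M.PosSemidef) : msqrt M * msqrt M = M := by
  rw [msqrt_eq_cfcSqrt hM]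
  exact CFC.sqrt_mul_sqrt_self M hM.nonneg

lemma inv_eq_msqrt_inv_mul_msqrt_inv (hM : M.PosSemidef) :
    M⁻¹ = (msqrt M)⁻¹ * (msqrt M)⁻¹ := by
  rw [← Matrix.mul_inv_rev, msqrt_mul_msqrt hM]

lemma msqrt_eq_of_mul_self_eq {X : Matrix m m ℂ} (hX : X.PosSemidef) (h : X * X = M) :
    msqrt M = X := by
  have hM : M.PosSemidef := by simpa only [sq, h] using hX.pow 2
  rw [msqrt_eq_cfcSqrt hM]
  exact CFC.sqrt_unique h hX.nonneg

lemma isUnit_det_msqrt (hM : M.PosDef) : IsUnit (msqrt M).det := by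
  have h : IsUnit (msqrt M * msqrt M).det := by
    rw [msqrt_mul_msqrt hM.posSemidef]
    exact (isUnit_iff_isUnit_det M).mp hM.isUnit
  rw [det_mul, IsUnit.mul_iff] at h
  exact h.1

end msqrt

section matGM

variable {m : Type*} [Fintype m] [DecidableEq m] {A B X : Matrix m m ℂ}

lemma posSemidef_matGM (A B : Matrix m m ℂ) : (matGM A B).PosSemidef :=
  (posSemidef_msqrt _).mul_mul_same_of_isHermitian (posSemidef_msqrt A).isHermitian

lemma matGM_mul_inv_mul_matGM (hA : A.PosDef) (hB : B.PosSemidef) :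
    matGM A B * A⁻¹ * matGM A B = B := by
  unfold matGM
  set S := msqrt A
  have hS : IsUnit S.det := isUnit_det_msqrt hA
  have hAinv : A⁻¹ = S⁻¹ * S⁻¹ := inv_eq_msqrt_inv_mul_msqrt_inv hA.posSemidef
  have hR := msqrt_mul_msqrt (hB.mul_mul_same_of_isHermitian (posSemidef_msqrt A).1.inv)
  rw [hAinv]
  calc _ = S * (msqrt (S⁻¹ * B * S⁻¹) * msqrt (S⁻¹ * B * S⁻¹)) * S := by
        simp only [Matrix.mul_assoc, mul_nonsing_inv_cancel_left _ _ hS,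
          nonsing_inv_mul_cancel_left _ _ hS]
    _ = B := by rw [hR, mul_nonsing_inv_mul_nonsing_inv_mul_cancel hS]

lemma matGM_eq_of_mul_inv_mul_eq (hA : A.PosDef) (hX : X.PosSemidef) (h : X * A⁻¹ * X = B) :
    matGM A B = X := by
  unfold matGM
  set S := msqrt A
  have hS : IsUnit S.det := isUnit_det_msqrt hA
  have hAinv : A⁻¹ = S⁻¹ * S⁻¹ := inv_eq_msqrt_inv_mul_msqrt_inv hA.posSemidef
  have hY : (S⁻¹ * X * S⁻¹) * (S⁻¹ * X * S⁻¹) = S⁻¹ * B * S⁻¹ := by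
    rw [← h, hAinv]
    simp only [Matrix.mul_assoc]
  rw [msqrt_eq_of_mul_self_eq (hX.mul_mul_same_of_isHermitian (posSemidef_msqrt A).1.inv) hY]
  exact mul_nonsing_inv_mul_nonsing_inv_mul_cancel hS X

end matGM

theorem stmt1 {m : Type*} [Fintype m] [DecidableEq m] {A B : Matrix m m ℂ}
    (hA : A.PosDef) (hB : B.PosDef) : matGM A B = matGM B A := by
  have hAB := matGM_mul_inv_mul_matGM hA hB.posSemidef
  have hunit : IsUnit (matGM A B).det :=
    isUnit_det_of_mul_inv_mul_eq ((isUnit_iff_isUnit_det B).mp hB.isUnit) hAB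
  have hBA := mul_inv_mul_eq_swap hunit ((isUnit_iff_isUnit_det A).mp hA.isUnit) hAB
  exact (matGM_eq_of_mul_inv_mul_eq hB (posSemidef_matGM A B) hBA).symm
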